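/- Let G be a finite graph with an elimination ordering π in which vertices are removed one at a time, and upon removal of a vertex all pairs of its current neighbors are connected. Define the width of π as the maximum degree of a vertex at the moment of its removal. If H is obtained from G by adding a set S of new vertices with arbitrary edges to G and among themselves, then in the ordering of H that eliminates the vertices of G first (in the order π, skipping S), the degree at the time of removal of each G-vertex increases by at most |S|, so the maximum over G-vertices of the degree at removal is at most width(π) + |S|. -/
import Mathlib


/-- Width of an elimination process: eliminate vertices in list order from the set `R`
of currently present vertices; on removing `v`, record its current degree (number of
neighbors among remaining vertices) and connect all pairs of its neighbors. -/
def elimW {V : Type*} [DecidableEq V] (G : V → V → Bool) : List V → Finset V → ℕ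
  | [], _ => 0
  | v :: rest, R =>
    max (((R.erase v).filter (fun u => G v u = true)).card)
        (elimW (fun a b => G a b || (G v a && G v b)) rest (R.erase v))

lemma elimW_aux {V : Type*} [DecidableEq V] (S : Finset V) :
    ∀ (π : List V) (G H : V → V → Bool) (A : Finset V),
    (∀ a b, (a ∈ S ∨ b ∈ S) → G a b = false) →
    (∀ a b, a ∉ S → b ∉ S → H a b = G a b) →
    (∀ u ∈ A, u ∉ S) → (∀ v ∈ π, v ∉ S) →
    elimW H π (A ∪ S) ≤ elimW G π A + S.card := by
  intro π
  induction π with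
  | nil => intro _ _ _ _ _ _ _; simp [elimW]
  | cons v rest ih =>
    intro G H A hG hH hA hπ
    have hvS : v ∉ S := hπ v (by simp)
    have herase : (A ∪ S).erase v = A.erase v ∪ S := by
      ext u
      simp only [Finset.mem_erase, Finset.mem_union]
      constructor
      · rintro ⟨h1, h2 | h2⟩
        · exact Or.inl ⟨h1, h2⟩
        · exact Or.inr h2
      · rintro (⟨h1, h2⟩ | h2)
        · exact ⟨h1, Or.inl h2⟩
        · exact ⟨fun h => hvS (h ▸ h2), Or.inr h2⟩
    simp only [elimW, herase]
    apply max_le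
    · -- degree bound
      calc ((A.erase v ∪ S).filter (fun u => H v u = true)).card
          ≤ ((A.erase v).filter (fun u => H v u = true)).card
            + (S.filter (fun u => H v u = true)).card := by
            rw [Finset.filter_union]; exact Finset.card_union_le _ _
        _ ≤ ((A.erase v).filter (fun u => G v u = true)).card + S.card := by
            have h1 : ((A.erase v).filter (fun u => H v u = true)).card
                ≤ ((A.erase v).filter (fun u => G v u = true)).card := by
              apply Finset.card_le_card
              intro u hu
              simp only [Finset.mem_filter] at hu ⊢
              have huS : u ∉ S := hA u (Finset.mem_of_mem_erase hu.1)
              exact ⟨hu.1, by rw [← hH v u hvS huS]; exact hu.2⟩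
            have h2 : (S.filter (fun u => H v u = true)).card ≤ S.card :=
              Finset.card_le_card (Finset.filter_subset _ _)
            omega
        _ ≤ max ((A.erase v).filter (fun u => G v u = true)).card
              (elimW (fun a b => G a b || (G v a && G v b)) rest (A.erase v))
            + S.card := by gcongr; exact le_max_left _ _
    · calc elimW (fun a b => H a b || (H v a && H v b)) rest (A.erase v ∪ S)
          ≤ elimW (fun a b => G a b || (G v a && G v b)) rest (A.erase v) + S.card := by
            apply ih
            · intro a b hs
              simp only [Bool.or_eq_false_iff, Bool.and_eq_false_iff]
              refine ⟨hG a b hs, ?_⟩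
              rcases hs with h | h
              · exact Or.inl (hG v a (Or.inr h))
              · exact Or.inr (hG v b (Or.inr h))
            · intro a b ha hb
              rw [hH a b ha hb, hH v a hvS ha, hH v b hvS hb]
            · intro u hu; exact hA u (Finset.mem_of_mem_erase hu)
            · intro u hu; exact hπ u (by simp [hu])
        _ ≤ max ((A.erase v).filter (fun u => G v u = true)).card
              (elimW (fun a b => G a b || (G v a && G v b)) rest (A.erase v))
            + S.card := by gcongr; exact le_max_right _ _

/-- Let `G` be a graph on the vertices outside `S`, and `H` extend `G`
by the new vertices `S` with arbitrary edges to `G`'s vertices and among themselves.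
For any elimination ordering `π` of the `G`-vertices, eliminating the `G`-vertices of
`H` in the same order increases the degree at time of removal of each `G`-vertex by
at most `|S|`: the width of the `G`-portion is at most `width(π) + |S|`. -/
theorem elim_width_add_vertices {V : Type*} [DecidableEq V] [Fintype V]
    (G H : V → V → Bool) (S : Finset V)
    (hGsym : ∀ a b, G a b = G b a) (hHsym : ∀ a b, H a b = H b a)
    (hG : ∀ a b, (a ∈ S ∨ b ∈ S) → G a b = false)
    (hH : ∀ a b, a ∉ S → b ∉ S → H a b = G a b)
    (π : List V) (hπ : ∀ v ∈ π, v ∉ S) (hnd : π.Nodup) :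
    elimW H π Finset.univ ≤ elimW G π (Finset.univ \ S) + S.card := by
  have : (Finset.univ : Finset V) = (Finset.univ \ S) ∪ S := by
    ext u; simp [em]
  nth_rewrite 1 [this]
  exact elimW_aux S π G H _ hG hH (fun u hu => (Finset.mem_sdiff.mp hu).2) hπ
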